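/- Fix a standard shifted domino tableau Q with n dominoes and a subset D ⊆ {0,...,n-1} with Peak^B(Des(Q)) ⊆ D △ (D+1). Then the number of marked standard shifted domino tableaux S with demark(S) = Q and Des(S) = D equals 2^{|Val^B(Des(Q))|}. -/
import Mathlib


/-- A domino in the plane: cells indexed by (row, column) with rows increasing downward.
A horizontal domino occupies `(r,c)` and `(r,c+1)`; a vertical one occupies `(r,c)` and
`(r+1,c)`. -/
structure Domino where
  r : ℕ
  c : ℕ
  horiz : Bool
deriving DecidableEq

/-- The two cells of a domino. -/
def Domino.cells (d : Domino) : Finset (ℕ × ℕ) :=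
  if d.horiz then {(d.r, d.c), (d.r, d.c + 1)} else {(d.r, d.c), (d.r + 1, d.c)}

/-- `d` is strictly lower than `e`: every cell of `d` lies in a strictly lower row than every
cell of `e`. -/
def Domino.StrictlyLower (d e : Domino) : Prop :=
  ∀ x ∈ d.cells, ∀ y ∈ e.cells, y.1 < x.1

/-- A domino lies weakly above the main diagonal if some cell `(r,c)` has `r ≤ c`. -/
def Domino.WeaklyAbove (d : Domino) : Prop := ∃ x ∈ d.cells, x.1 ≤ x.2

/-- A domino lies strictly below the main diagonal if every cell `(r,c)` has `c < r`. -/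
def Domino.StrictlyBelowDiag (d : Domino) : Prop := ∀ x ∈ d.cells, x.2 < x.1

/-- A domino lies on the main diagonal if it contains a diagonal cell `(i,i)`. -/
def Domino.OnDiag (d : Domino) : Prop := ∃ i : ℕ, (i, i) ∈ d.cells

/-- `e` is left of and adjacent to `d`. -/
def Domino.LeftAdjacent (e d : Domino) : Prop :=
  ∃ r c : ℕ, (r, c) ∈ e.cells ∧ (r, c + 1) ∈ d.cells

/-- A standard shifted domino tableau with `n` dominoes weakly above the main diagonal:
a shifted domino tiling of a Young diagram, together with a bijective filling of the
dominoes lying weakly above the main diagonal by `1, ..., n` (here `dom i` is the domino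
with entry `i+1` for `i : Fin n`) such that entries increase from left to right along rows
and from top to bottom in columns. -/
structure SShDT (n : ℕ) where
  shape : YoungDiagram
  tiling : Finset Domino
  covers : ∀ x : ℕ × ℕ, x ∈ shape ↔ ∃ d ∈ tiling, x ∈ d.cells
  disjoint : ∀ d ∈ tiling, ∀ e ∈ tiling, d ≠ e → ∀ x ∈ d.cells, x ∉ e.cells
  shifted : ∀ d ∈ tiling, d.horiz = false → d.OnDiag →
      ¬ (∀ e ∈ tiling, e.LeftAdjacent d → e.StrictlyBelowDiag)
  dom : Fin n → Domino
  dom_mem : ∀ i, dom i ∈ tiling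
  dom_above : ∀ i, (dom i).WeaklyAbove
  dom_bij : ∀ d ∈ tiling, d.WeaklyAbove → ∃! i : Fin n, dom i = d
  incr_row : ∀ i j : Fin n, ∀ r c : ℕ,
      (r, c) ∈ (dom i).cells → (r, c + 1) ∈ (dom j).cells → i ≠ j → i < j
  incr_col : ∀ i j : Fin n, ∀ r c : ℕ,
      (r, c) ∈ (dom i).cells → (r + 1, c) ∈ (dom j).cells → i ≠ j → i < j

/-- The descent set of a standard shifted domino tableau: `0` is a descent iff the domino with
entry `1` is vertical, and `i ∈ {1,...,n-1}` is a descent iff the domino with entry `i+1` is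
strictly lower than the domino with entry `i`. -/
def SShDT.des {n : ℕ} (Q : SShDT n) : Set ℕ :=
  {i | ∃ h : i < n,
    if i = 0 then (Q.dom ⟨0, by omega⟩).horiz = false
    else Domino.StrictlyLower (Q.dom ⟨i, h⟩) (Q.dom ⟨i - 1, by omega⟩)}

/-- The descent set of the marked standard shifted domino tableau obtained from `Q` by priming
the entries in `P`: `0` is a descent iff `1` is primed or the domino with entry `1` is vertical;
`i ≥ 1` is a descent iff either `i` is unprimed and `i ∈ Des(Q)`, or `i+1` is primed and
`i ∉ Des(Q)`. -/
def SShDT.mdes {n : ℕ} (Q : SShDT n) (P : Finset ℕ) : Set ℕ :=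
  {i | ∃ h : i < n,
    if i = 0 then (1 ∈ P ∨ (Q.dom ⟨0, by omega⟩).horiz = false)
    else ((i ∉ P ∧ i ∈ Q.des) ∨ (i + 1 ∈ P ∧ i ∉ Q.des))}

/-- The type-B peak set of a set `I`: `{p ≥ 1 : p ∈ I, p - 1 ∉ I}`. -/
def peakB (I : Set ℕ) : Set ℕ := {p | 1 ≤ p ∧ p ∈ I ∧ p - 1 ∉ I}

/-- The type-B valley set of `I ⊆ {0,...,n-1}`: `{v ∈ {1,...,n} : v ∉ I, v - 1 ∈ I}`. -/
def valB (n : ℕ) (I : Set ℕ) : Set ℕ := {v | 1 ≤ v ∧ v ≤ n ∧ v ∉ I ∧ v - 1 ∈ I}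

lemma SShDT.dom_horiz_zero {n : ℕ} (Q : SShDT n) (h : 0 < n) :
    (Q.dom ⟨0, h⟩).horiz = true := by
  by_contra hv
  set i0 : Fin n := ⟨0, h⟩ with hi0
  set e := Q.dom i0 with he
  have hif : e.horiz = false := by
    cases hb : e.horiz
    · rfl
    · exact absurd hb hv
  have hmem := Q.dom_mem i0
  have hab := Q.dom_above i0
  have hcells : e.cells = {(e.r, e.c), (e.r + 1, e.c)} := by
    simp [Domino.cells, hif]
  have hrc : e.r ≤ e.c := by
    obtain ⟨x, hx, hxle⟩ := hab
    rw [← he, hcells] at hx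
    simp only [Finset.mem_insert, Finset.mem_singleton] at hx
    rcases hx with h1 | h1 <;> subst h1 <;> simp at hxle <;> omega
  by_cases hr : e.r = 0
  · by_cases hc : e.c = 0
    · -- vertical domino at (0,0): contradicts `shifted`
      have hdiag : e.OnDiag := ⟨0, by rw [hcells]; simp [hr, hc]⟩
      apply Q.shifted e hmem hif hdiag
      intro f hf hadj
      exfalso
      obtain ⟨r, c, _, hcd⟩ := hadj
      rw [hcells] at hcd
      simp only [hr, hc, Finset.mem_insert, Finset.mem_singleton, Prod.mk.injEq] at hcd
      omega
    · -- vertical domino with top cell (0, e.c), e.c ≥ 1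
      have hc1 : 1 ≤ e.c := Nat.one_le_iff_ne_zero.2 hc
      have hsh : ((0 : ℕ), e.c) ∈ Q.shape := by
        rw [Q.covers]
        exact ⟨e, hmem, by rw [hcells]; simp [hr]⟩
      have hsh' : ((0 : ℕ), e.c - 1) ∈ Q.shape :=
        Q.shape.up_left_mem le_rfl (by omega) hsh
      obtain ⟨g, hg, hgc⟩ := (Q.covers _).1 hsh'
      have hgab : g.WeaklyAbove := ⟨(0, e.c - 1), hgc, by simp⟩
      obtain ⟨i, hi, -⟩ := Q.dom_bij g hg hgab
      have hne : i ≠ i0 := by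
        intro hcon
        rw [hcon, ← he] at hi
        rw [← hi, hcells] at hgc
        simp only [Finset.mem_insert, Finset.mem_singleton, Prod.mk.injEq] at hgc
        omega
      have hlt := Q.incr_row i i0 0 (e.c - 1) (by rw [hi]; exact hgc)
        (by
          rw [← he, hcells]
          have hcc : e.c - 1 + 1 = e.c := by omega
          rw [hcc]
          simp [hr]) hne
      have : i.1 < (0 : ℕ) := hlt
      omega
  · -- top cell in row e.r ≥ 1
    have hr1 : 1 ≤ e.r := Nat.one_le_iff_ne_zero.2 hr
    have hsh : (e.r, e.c) ∈ Q.shape := by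
      rw [Q.covers]
      exact ⟨e, hmem, by rw [hcells]; simp⟩
    have hsh' : (e.r - 1, e.c) ∈ Q.shape :=
      Q.shape.up_left_mem (by omega) le_rfl hsh
    obtain ⟨g, hg, hgc⟩ := (Q.covers _).1 hsh'
    have hgab : g.WeaklyAbove := ⟨(e.r - 1, e.c), hgc, by simp; omega⟩
    obtain ⟨i, hi, -⟩ := Q.dom_bij g hg hgab
    have hne : i ≠ i0 := by
      intro hcon
      rw [hcon, ← he] at hi
      rw [← hi, hcells] at hgc
      simp only [Finset.mem_insert, Finset.mem_singleton, Prod.mk.injEq] at hgc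
      omega
    have hlt := Q.incr_col i i0 (e.r - 1) e.c (by rw [hi]; exact hgc)
      (by
        rw [← he, hcells]
        have hcc : e.r - 1 + 1 = e.r := by omega
        rw [hcc]
        simp) hne
    have : i.1 < (0 : ℕ) := hlt
    omega

lemma SShDT.zero_not_des {n : ℕ} (Q : SShDT n) : 0 ∉ Q.des := by
  rintro ⟨h, hif⟩
  rw [if_pos rfl] at hif
  have := Q.dom_horiz_zero h
  rw [hif] at this
  exact Bool.false_ne_true this

lemma SShDT.des_lt {n : ℕ} (Q : SShDT n) {i : ℕ} (hi : i ∈ Q.des) : i < n := hi.choose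

lemma SShDT.mem_mdes_zero {n : ℕ} (Q : SShDT n) (P : Finset ℕ) (h : 0 < n) :
    0 ∈ Q.mdes P ↔ 1 ∈ P := by
  constructor
  · rintro ⟨h', hif⟩
    rw [if_pos rfl] at hif
    rcases hif with h1 | h1
    · exact h1
    · exfalso
      have := Q.dom_horiz_zero h'
      rw [h1] at this
      exact Bool.false_ne_true this
  · intro h1
    exact ⟨h, by rw [if_pos rfl]; exact Or.inl h1⟩

lemma SShDT.mem_mdes_pos {n : ℕ} (Q : SShDT n) (P : Finset ℕ) {i : ℕ}
    (hi : 1 ≤ i) (h : i < n) :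
    i ∈ Q.mdes P ↔ ((i ∉ P ∧ i ∈ Q.des) ∨ (i + 1 ∈ P ∧ i ∉ Q.des)) := by
  constructor
  · rintro ⟨h', hif⟩
    rwa [if_neg (by omega : ¬ i = 0)] at hif
  · intro hh
    exact ⟨h, by rw [if_neg (by omega : ¬ i = 0)]; exact hh⟩

lemma SShDT.mdes_lt {n : ℕ} (Q : SShDT n) (P : Finset ℕ) {i : ℕ}
    (hi : i ∈ Q.mdes P) : i < n := hi.choose

/-- The key characterization: `mdes P = D` iff `P` takes the forced value on every
entry outside the type-B valley set of `Des(Q)`. -/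
lemma SShDT.mdes_eq_iff {n : ℕ} (Q : SShDT n) (D : Set ℕ)
    (hD : D ⊆ {i | i < n})
    (hpk : peakB Q.des ⊆ (D \ ((· + 1) '' D)) ∪ (((· + 1) '' D) \ D))
    (P : Finset ℕ) :
    Q.mdes P = D ↔ ∀ j, 1 ≤ j → j ≤ n → j ∉ valB n Q.des →
      ((j ∈ P) ↔ ((j - 1 ∈ Q.des ∧ j ∉ D) ∨ (j - 1 ∉ Q.des ∧ j - 1 ∈ D))) := by
  have hz : (0 : ℕ) ∉ Q.des := Q.zero_not_des
  have hxor : ∀ i : ℕ, 1 ≤ i → i ∈ Q.des → i - 1 ∉ Q.des → (i ∉ D ↔ i - 1 ∈ D) := by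
    intro i hi h1 h2
    rcases hpk ⟨hi, h1, h2⟩ with ⟨hd, hnd⟩ | ⟨hd, hnd⟩
    · have h3 : i - 1 ∉ D := fun hc => hnd ⟨i - 1, hc, by simp; omega⟩
      tauto
    · obtain ⟨d, hdD, hde⟩ := hd
      have hde' : d + 1 = i := hde
      have hdi : d = i - 1 := by omega
      subst hdi
      tauto
  constructor
  · intro h j hj1 hjn hjv
    have hm : ∀ i, i ∈ Q.mdes P ↔ i ∈ D := fun i => by rw [h]
    have hcase : j ∈ Q.des ∨ j - 1 ∉ Q.des := by
      by_contra hcon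
      push_neg at hcon
      exact hjv ⟨hj1, hjn, hcon.1, hcon.2⟩
    by_cases hd1 : j - 1 ∈ Q.des
    · have hdj : j ∈ Q.des := by tauto
      have hjlt : j < n := Q.des_lt hdj
      have hiff := hm j
      rw [Q.mem_mdes_pos P hj1 hjlt] at hiff
      tauto
    · rcases (by omega : j = 1 ∨ 2 ≤ j) with rfl | hj2
      · have h0 := hm 0
        rw [Q.mem_mdes_zero P (by omega)] at h0
        have h10 : (1 : ℕ) - 1 = 0 := rfl
        rw [h10]
        tauto
      · have hiff := hm (j - 1)
        rw [Q.mem_mdes_pos P (by omega) (by omega)] at hiff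
        have hjj : j - 1 + 1 = j := by omega
        rw [hjj] at hiff
        tauto
  · intro hc
    ext i
    by_cases hin : i < n
    · rcases Nat.eq_zero_or_pos i with rfl | hi1
      · show (0 ∈ Q.mdes P) ↔ (0 ∈ D)
        have hmz := Q.mem_mdes_zero P hin
        have h1v : (1 : ℕ) ∉ valB n Q.des := fun hv => hz (by
          have := hv.2.2.2
          simpa using this)
        have h1c := hc 1 le_rfl (by omega) h1v
        have h10 : (1 : ℕ) - 1 = 0 := rfl
        rw [h10] at h1c
        have : (1 : ℕ) ∈ P ↔ (0 : ℕ) ∈ D := by tauto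
        rw [hmz]
        exact this
      · show (i ∈ Q.mdes P) ↔ (i ∈ D)
        rw [Q.mem_mdes_pos P hi1 hin]
        by_cases hdi : i ∈ Q.des
        · have hiP := hc i hi1 (by omega) (fun hv => hv.2.2.1 hdi)
          by_cases hd1 : i - 1 ∈ Q.des
          · tauto
          · have hx := hxor i hi1 hdi hd1
            tauto
        · have hiv : i + 1 ∉ valB n Q.des := by
            intro hv
            have := hv.2.2.2
            rw [Nat.add_sub_cancel] at this
            exact hdi this
          have hiP := hc (i + 1) (by omega) (by omega) hiv
          rw [Nat.add_sub_cancel] at hiP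
          tauto
    · show (i ∈ Q.mdes P) ↔ (i ∈ D)
      constructor
      · intro hmem
        exact absurd (Q.mdes_lt P hmem) hin
      · intro hmem
        exact absurd (hD hmem) hin

/-- Fix a standard shifted domino tableau `Q` with `n` dominoes and a subset
`D ⊆ {0,...,n-1}` with `Peak^B(Des(Q)) ⊆ D △ (D+1)`.  The number of markings `P` (sets of
primed entries) whose marked tableau has descent set exactly `D` is `2^{|Val^B(Des(Q))|}`. -/
theorem card_markings_with_descent_set (n : ℕ) (Q : SShDT n) (D : Set ℕ)
    (hD : D ⊆ {i | i < n})
    (hpk : peakB Q.des ⊆ (D \ ((· + 1) '' D)) ∪ (((· + 1) '' D) \ D)) :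
    Set.ncard {P : Finset ℕ | P ⊆ Finset.Icc 1 n ∧ Q.mdes P = D}
      = 2 ^ (valB n Q.des).ncard := by
  classical
  have key := Q.mdes_eq_iff D hD hpk
  set V : Finset ℕ := (Finset.Icc 1 n).filter (fun j => j ∈ valB n Q.des) with hV
  set F : Finset ℕ := (Finset.Icc 1 n).filter
      (fun j => j ∉ valB n Q.des ∧ ((j - 1 ∈ Q.des ∧ j ∉ D) ∨ (j - 1 ∉ Q.des ∧ j - 1 ∈ D))) with hF
  have hVmem : ∀ j, j ∈ V ↔ (1 ≤ j ∧ j ≤ n ∧ j ∈ valB n Q.des) := by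
    intro j
    rw [hV, Finset.mem_filter, Finset.mem_Icc]
    tauto
  have hFmem : ∀ j, j ∈ F ↔ (1 ≤ j ∧ j ≤ n ∧ j ∉ valB n Q.des ∧
      ((j - 1 ∈ Q.des ∧ j ∉ D) ∨ (j - 1 ∉ Q.des ∧ j - 1 ∈ D))) := by
    intro j
    rw [hF, Finset.mem_filter, Finset.mem_Icc]
    tauto
  have hset : {P : Finset ℕ | P ⊆ Finset.Icc 1 n ∧ Q.mdes P = D}
      = (fun T => F ∪ T) '' (↑V.powerset : Set (Finset ℕ)) := by
    ext P
    simp only [Set.mem_setOf_eq, Set.mem_image, Finset.mem_coe, Finset.mem_powerset]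
    constructor
    · rintro ⟨hPs, hPd⟩
      refine ⟨P ∩ V, Finset.inter_subset_right, ?_⟩
      have hkey := (key P).mp hPd
      ext j
      rw [Finset.mem_union, Finset.mem_inter]
      constructor
      · rintro (hjF | ⟨hjP, -⟩)
        · obtain ⟨h1, h2, h3, h4⟩ := (hFmem j).mp hjF
          exact (hkey j h1 h2 h3).mpr h4
        · exact hjP
      · intro hjP
        have hjIcc := hPs hjP
        rw [Finset.mem_Icc] at hjIcc
        by_cases hjv : j ∈ valB n Q.des
        · exact Or.inr ⟨hjP, (hVmem j).mpr ⟨hjIcc.1, hjIcc.2, hjv⟩⟩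
        · exact Or.inl ((hFmem j).mpr ⟨hjIcc.1, hjIcc.2, hjv, (hkey j hjIcc.1 hjIcc.2 hjv).mp hjP⟩)
    · rintro ⟨T, hT, rfl⟩
      have hsub : F ∪ T ⊆ Finset.Icc 1 n := by
        intro j hj
        rw [Finset.mem_union] at hj
        rcases hj with hj | hj
        · obtain ⟨h1, h2, -, -⟩ := (hFmem j).mp hj
          exact Finset.mem_Icc.mpr ⟨h1, h2⟩
        · obtain ⟨h1, h2, -⟩ := (hVmem j).mp (hT hj)
          exact Finset.mem_Icc.mpr ⟨h1, h2⟩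
      refine ⟨hsub, (key _).mpr ?_⟩
      intro j h1 h2 h3
      rw [Finset.mem_union]
      constructor
      · rintro (hj | hj)
        · exact ((hFmem j).mp hj).2.2.2
        · exact absurd ((hVmem j).mp (hT hj)).2.2 h3
      · intro hfj
        exact Or.inl ((hFmem j).mpr ⟨h1, h2, h3, hfj⟩)
  rw [hset]
  have hinj : Set.InjOn (fun T => F ∪ T) (↑V.powerset : Set (Finset ℕ)) := by
    intro T1 h1 T2 h2 heq
    simp only [Finset.mem_coe, Finset.mem_powerset] at h1 h2
    have heq' : F ∪ T1 = F ∪ T2 := heq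
    have hrec : ∀ T : Finset ℕ, T ⊆ V → (F ∪ T) ∩ V = T := by
      intro T hT
      ext j
      rw [Finset.mem_inter, Finset.mem_union]
      constructor
      · rintro ⟨hj | hj, hjV⟩
        · exact absurd ((hVmem j).mp hjV).2.2 ((hFmem j).mp hj).2.2.1
        · exact hj
      · intro hj
        exact ⟨Or.inr hj, hT hj⟩
    calc T1 = (F ∪ T1) ∩ V := (hrec T1 h1).symm
      _ = (F ∪ T2) ∩ V := by rw [heq']
      _ = T2 := hrec T2 h2
  rw [Set.ncard_image_of_injOn hinj, Set.ncard_coe_finset, Finset.card_powerset]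
  congr 1
  have hVeq : valB n Q.des = (↑V : Set ℕ) := by
    ext v
    rw [Finset.mem_coe, hVmem v]
    constructor
    · intro hv
      exact ⟨hv.1, hv.2.1, hv⟩
    · exact fun h => h.2.2
  rw [hVeq, Set.ncard_coe_finset]
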